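/- Contraction bound for the linearized self-consistent operator: Assume |Re z̃| ≤ 2−κ for a constant κ > 0 and set m := m_sc(z̃ + i0⁺). For any fixed τ > 0 there is a constant c₁ > 0 such that ‖ ( (m²S₀ + τ)/(1 + τ) )² ‖_{ℓ∞→ℓ∞} < 1 − c₁, where S₀ is the matrix with entries s_ij and m²S₀ denotes the matrix with entries m²·s_ij. -/

import Mathlib

open MeasureTheory ProbabilityTheory Matrix Finset
open scoped Classical

noncomputable section

namespace RBM

/-- Integer representative of `x : Fin N` in `(-N/2, N/2]`. -/
def rep {N : ℕ} (x : Fin N) : ℤ :=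
  if 2 * x.val ≤ N then (x.val : ℤ) else (x.val : ℤ) - N

/-- Periodic distance `|x|` on `ℤ_N`, as a real number. -/
def zdist {N : ℕ} (x : Fin N) : ℝ := |(rep x : ℝ)|

/-- The block of indices `⟦1, W⟧` inside `ℤ_N`. -/
def inBlock {N : ℕ} (W : ℕ) (i : Fin N) : Prop := 1 ≤ i.val ∧ i.val ≤ W

/-- Band variance profile `s_{ij} = f(i-j)` with band width `W`. -/
structure IsBandProfile {N : ℕ} (W : ℕ) (cs Cs : ℝ) (f : Fin N → ℝ) : Prop where
  nonneg : ∀ x, 0 ≤ f x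
  symm : ∀ i j : Fin N, f (i - j) = f (j - i)
  sum_one : ∑ x, f x = 1
  lower : ∀ x, zdist x ≤ W → cs / W ≤ f x
  upper : ∀ x, f x ≤ if zdist x ≤ Cs * W then Cs / W else 0

/-- Entries of the variance matrix `S_ζ`. -/
def sZeta {N : ℕ} (W : ℕ) (ζ : ℝ) (f : Fin N → ℝ) (i j : Fin N) : ℝ :=
  f (i - j) - (if inBlock W i ∧ inBlock W j then ζ * (1 + if i = j then 1 else 0) / W else 0)

/-- The random band matrix ensemble `H_ζ`: real symmetric, centered independent entries with
variance profile `S_ζ`, and all moments controlled by the standard deviation. -/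
structure IsBandEnsemble {N : ℕ} (W : ℕ) (cs Cs : ℝ) (μmom : ℕ → ℝ) (ζ : ℝ)
    {Ω : Type*} [MeasurableSpace Ω] (P : Measure Ω)
    (f : Fin N → ℝ) (H : Ω → Matrix (Fin N) (Fin N) ℝ) : Prop where
  profile : IsBandProfile W cs Cs f
  meas : ∀ i j, Measurable fun ω => H ω i j
  symm : ∀ ω, (H ω).IsSymm
  indep : iIndepFun
    (fun (p : {p : Fin N × Fin N // p.1 ≤ p.2}) ω => H ω p.1.1 p.1.2) P
  centered : ∀ i j, ∫ ω, H ω i j ∂P = 0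
  variance : ∀ i j, ∫ ω, (H ω i j) ^ 2 ∂P = sZeta W ζ f i j
  moment : ∀ (p : ℕ) (i j), ∫ ω, |H ω i j| ^ p ∂P ≤ μmom p ^ p * sZeta W ζ f i j ^ ((p : ℝ) / 2)

/-- The deterministic diagonal matrix with the two spectral parameters. -/
def Zmat {N : ℕ} (W : ℕ) (z zt : ℂ) : Matrix (Fin N) (Fin N) ℂ :=
  Matrix.diagonal fun i => if inBlock W i then z else zt

/-- The generalized resolvent `G_ζ^g(z, z̃)` of `H_ζ - diag g`. -/
def resolvent {N : ℕ} (W : ℕ) (g : Fin N → ℝ) (H : Matrix (Fin N) (Fin N) ℝ)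
    (z zt : ℂ) : Matrix (Fin N) (Fin N) ℂ :=
  ((H - Matrix.diagonal g).map (fun x => (x : ℂ)) - Zmat W z zt)⁻¹

/-- The `T`-matrix `T_{ij} = ∑_k (S_ζ)_{ik} |G_{kj}|²`. -/
def Tmat {N : ℕ} (W : ℕ) (ζ : ℝ) (f : Fin N → ℝ)
    (G : Matrix (Fin N) (Fin N) ℂ) (i j : Fin N) : ℝ :=
  ∑ k, sZeta W ζ f i k * ‖G k j‖ ^ 2

/-- The self-consistent equation for the vector `M`. -/
def IsSCSolution {N : ℕ} (W : ℕ) (ζ : ℝ) (f : Fin N → ℝ) (g : Fin N → ℝ)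
    (z zt : ℂ) (M : Fin N → ℂ) : Prop :=
  ∀ i, (M i)⁻¹ =
    -(if inBlock W i then z else zt) - (g i : ℂ) - ∑ j, (sZeta W ζ f i j : ℂ) * M j

/-- Stieltjes transform of the semicircle law (the branch mapping `ℂ⁺` to `ℂ⁺`). -/
def msc (z : ℂ) : ℂ := z * (-1 + (1 - 4 / z ^ 2) ^ ((1 : ℂ) / 2)) / 2

/-- Boundary value `m_sc(z̃ + i·0⁺)` for `z̃ ∈ ℂ⁺ ∪ ℝ`. -/
def mscB (z : ℂ) : ℂ :=
  if 0 < z.im then msc z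
  else (-z + Complex.I * (Real.sqrt (4 - z.re ^ 2) : ℝ)) / 2

/-- The σ-algebra generated by the matrix minor obtained by removing row and column `k`. -/
def minorSigma {N : ℕ} {Ω : Type*} [MeasurableSpace Ω]
    (H : Ω → Matrix (Fin N) (Fin N) ℝ) (k : Fin N) : MeasurableSpace Ω :=
  MeasurableSpace.comap
    (fun ω (p : {p : Fin N × Fin N // p.1 ≠ k ∧ p.2 ≠ k}) => H ω p.1.1 p.1.2) inferInstance

/-- The matrix `1 - M² S_ζ` (with `M²` the diagonal matrix with entries `M_i²`). -/
def oneSubM2S {N : ℕ} (W : ℕ) (ζ : ℝ) (f : Fin N → ℝ) (M : Fin N → ℂ) :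
    Matrix (Fin N) (Fin N) ℂ :=
  1 - (Matrix.diagonal fun i => (M i) ^ 2) * (Matrix.of fun i j => ((sZeta W ζ f i j : ℝ) : ℂ))

/-- The real matrix `1 - S_ζ |M|²` (with `|M|²` the diagonal matrix with entries `|M_j|²`). -/
def oneSubSM2 {N : ℕ} (W : ℕ) (ζ : ℝ) (f : Fin N → ℝ) (M : Fin N → ℂ) :
    Matrix (Fin N) (Fin N) ℝ :=
  1 - (Matrix.of fun i j => sZeta W ζ f i j) * (Matrix.diagonal fun j => ‖M j‖ ^ 2)

/-- The `ℓ∞ → ℓ∞` operator norm of a complex matrix (maximal absolute row sum). -/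
def rowSumNorm {N : ℕ} (A : Matrix (Fin N) (Fin N) ℂ) : ℝ := ⨆ i, ∑ j, ‖A i j‖

end RBM

/-!
Write `u = m²`, so that `((u S₀ + τ) / (1 + τ))² = (u² S₀² + 2τ u S₀ + τ²) / (1 + τ)²`. Since
`|m| ≤ 1`, each entry obeys `|u² (S₀²)ᵢⱼ + 2τ u (S₀)ᵢⱼ| ≤ |u (S₀²)ᵢⱼ + 2τ (S₀)ᵢⱼ|`, and because
`m + 1/m = -z̃` forces `Re u ≤ 1 - κ/2`, the two summands on the right are not aligned: the
triangle inequality loses at least a fixed multiple of `W (S₀²)ᵢⱼ (S₀)ᵢⱼ`. Without this loss the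
row sums would be exactly `1`, as `S₀` is row stochastic. The total loss in a row is of order one,
because on the `≳ W` sites with `|x| ≤ W/2` both `f` and `f * f` are `≳ 1/W`.
-/

namespace RBM

open Complex

lemma norm_msc_le_one {z : ℂ} (hz : z ≠ 0) : ‖msc z‖ ≤ 1 := by
  set s := (1 - 4 / z ^ 2) ^ ((1 : ℂ) / 2) with hs
  have hs_re : 0 ≤ s.re := by
    rw [hs, one_div, cpow_inv_two_re]
    exact Real.sqrt_nonneg _
  have hs_sq : s ^ 2 = 1 - 4 / z ^ 2 := by rw [hs, one_div]; exact cpow_ofNat_inv_pow _ 2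
  -- `Re s ≥ 0` puts `s` closer to `1` than to `-1`, and `(s - 1)(s + 1) = -4 / z²`.
  have h_closer : ‖s - 1‖ ≤ ‖s + 1‖ := by
    rw [← sq_le_sq₀ (norm_nonneg _) (norm_nonneg _), Complex.sq_norm, Complex.sq_norm,
      normSq_apply, normSq_apply]
    simp only [sub_re, add_re, sub_im, add_im, one_re, one_im]
    nlinarith
  have h_prod : ‖z‖ ^ 2 * (‖s - 1‖ * ‖s + 1‖) = 4 := by
    rw [← norm_mul, show (s - 1) * (s + 1) = -(4 / z ^ 2) by linear_combination hs_sq,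
      norm_neg, norm_div, norm_pow]
    field_simp
    norm_num
  have h_msc : ‖msc z‖ = ‖z‖ * ‖s - 1‖ / 2 := by
    rw [msc, ← hs, norm_div, norm_mul, neg_add_eq_sub]
    norm_num
  rw [h_msc, div_le_one two_pos]
  nlinarith [mul_nonneg (norm_nonneg z) (norm_nonneg (s - 1)),
    mul_le_mul_of_nonneg_left h_closer (mul_nonneg (sq_nonneg ‖z‖) (norm_nonneg (s - 1)))]

lemma msc_sq_add_mul_add_one {z : ℂ} (hz : z ≠ 0) : msc z ^ 2 + z * msc z + 1 = 0 := by
  set s := (1 - 4 / z ^ 2) ^ ((1 : ℂ) / 2) with hs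
  have hs_sq : z ^ 2 * s ^ 2 = z ^ 2 - 4 := by
    rw [hs, one_div, cpow_ofNat_inv_pow]
    field_simp
  rw [msc, ← hs]
  linear_combination hs_sq / 4

lemma mscB_spec {z : ℂ} (him : 0 ≤ z.im) (hre : |z.re| ≤ 2) :
    mscB z ^ 2 + z * mscB z + 1 = 0 ∧ ‖mscB z‖ ≤ 1 := by
  rcases him.lt_or_eq with hpos | hzero
  · have hz : z ≠ 0 := fun h => by simp [h] at hpos
    rw [mscB, if_pos hpos]
    exact ⟨msc_sq_add_mul_add_one hz, norm_msc_le_one hz⟩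
  · obtain ⟨x, rfl⟩ : ∃ x : ℝ, z = x := ⟨z.re, by apply Complex.ext <;> simp [← hzero]⟩
    simp only [ofReal_re] at hre
    have hq : Real.sqrt (4 - x ^ 2) ^ 2 = 4 - x ^ 2 := Real.sq_sqrt (by nlinarith [abs_le.mp hre])
    have hq' : ((√(4 - x ^ 2) : ℝ) : ℂ) ^ 2 = 4 - (x : ℂ) ^ 2 := by exact_mod_cast hq
    simp only [mscB, ofReal_im, lt_irrefl, if_false, ofReal_re]
    constructor
    · linear_combination (-(1 : ℂ) / 4) * hq' + (√(4 - x ^ 2) : ℂ) ^ 2 / 4 * I_sq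
    · rw [norm_div, Complex.norm_two, div_le_one two_pos, ← sq_le_sq₀ (norm_nonneg _) zero_le_two,
        Complex.sq_norm, normSq_apply]
      simp only [add_re, neg_re, ofReal_re, mul_re, I_re, zero_mul, I_im, ofReal_im, mul_zero,
        sub_self, add_zero, mul_neg, neg_mul, neg_neg, add_im, neg_im, neg_zero, mul_im, one_mul,
        zero_add]
      nlinarith

lemma re_sq_le_of_quadratic {κ : ℝ} {z m : ℂ} (hm : m ^ 2 + z * m + 1 = 0) (hm1 : ‖m‖ ≤ 1)
    (hre : |z.re| ≤ 2 - κ) : (m ^ 2).re ≤ 1 - κ / 2 := by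
  have hre_eq := congrArg Complex.re hm
  have him_eq := congrArg Complex.im hm
  simp only [add_re, add_im, mul_re, mul_im, sq, one_re, one_im, zero_re, zero_im] at hre_eq him_eq
  rw [sq, mul_re]
  set a := m.re
  set b := m.im
  have hs1 : a ^ 2 + b ^ 2 ≤ 1 := by
    rw [← sq_le_one_iff₀ (norm_nonneg m), Complex.sq_norm, normSq_apply] at hm1
    nlinarith
  have hs0 : 0 < a ^ 2 + b ^ 2 := by
    rcases (add_nonneg (sq_nonneg a) (sq_nonneg b)).lt_or_eq with h | h
    · exact h
    · have ha : a = 0 := by nlinarith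
      have hb : b = 0 := by nlinarith
      simp [ha, hb] at hre_eq
  -- `m + 1/m = -z`, whose real part is `-a (1 + |m|²) / |m|²`.
  have h_real : a * (1 + (a ^ 2 + b ^ 2)) = -(a ^ 2 + b ^ 2) * z.re := by
    linear_combination a * hre_eq + b * him_eq
  obtain ⟨hz_lo, hz_hi⟩ := abs_le.mp hre
  have h_a : 4 * a ^ 2 ≤ (a ^ 2 + b ^ 2) * (2 - κ) ^ 2 := by
    have : (a * (1 + (a ^ 2 + b ^ 2))) ^ 2 ≤ ((a ^ 2 + b ^ 2) * (2 - κ)) ^ 2 := by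
      rw [h_real, neg_mul, neg_sq, mul_pow, mul_pow]
      exact mul_le_mul_of_nonneg_left (sq_le_sq' hz_lo hz_hi) (sq_nonneg _)
    nlinarith [sq_nonneg (1 - (a ^ 2 + b ^ 2)), sq_nonneg a]
  nlinarith [mul_nonneg hs0.le (sub_nonneg.mpr hs1), sq_nonneg (2 - κ)]

lemma le_sub_div_of_sq_le_sq_sub {x A B : ℝ} (hA : 0 < A) (h : x ^ 2 ≤ A ^ 2 - B) :
    x ≤ A - B / (2 * A) := by
  rw [le_sub_iff_add_le, ← le_sub_iff_add_le', div_le_iff₀ (by positivity)]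
  nlinarith [sq_nonneg (x - A)]

lemma norm_mul_ofReal_add_ofReal_le {u : ℂ} {δ c t : ℝ} (hu : ‖u‖ ≤ 1) (hre : u.re ≤ 1 - δ)
    (hc : 0 ≤ c) (ht : 0 ≤ t) (hct : 0 < c + t) :
    ‖u * c + t‖ ≤ c + t - δ * c * t / (c + t) := by
  have hu2 : u.re ^ 2 + u.im ^ 2 ≤ 1 := by
    rw [← sq_le_one_iff₀ (norm_nonneg u), Complex.sq_norm, normSq_apply] at hu
    nlinarith
  have key : ‖u * c + t‖ ^ 2 ≤ (c + t) ^ 2 - 2 * δ * c * t := by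
    rw [Complex.sq_norm, normSq_apply]
    simp only [add_re, add_im, mul_re, mul_im, ofReal_re, ofReal_im]
    nlinarith [mul_le_mul_of_nonneg_left hu2 (sq_nonneg c), mul_nonneg hc ht]
  convert le_sub_div_of_sq_le_sq_sub hct key using 2
  field_simp

lemma norm_sq_mul_add_mul_le {u : ℂ} {δ τ p s D : ℝ} (hu : ‖u‖ ≤ 1) (hre : u.re ≤ 1 - δ)
    (hδ : 0 ≤ δ) (hτ : 0 < τ) (hp : 0 ≤ p) (hs : 0 ≤ s) (hpD : p ≤ D) (hsD : s ≤ D) :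
    ‖u ^ 2 * p + 2 * τ * u * s‖ ≤ p + 2 * τ * s - 2 * τ * δ / ((1 + 2 * τ) * D) * (p * s) := by
  rcases (add_nonneg hp (mul_nonneg (mul_nonneg zero_le_two hτ.le) hs)).lt_or_eq with hpos | hzero
  · have hfac : u ^ 2 * p + 2 * τ * u * s = u * (u * p + ((2 * τ * s : ℝ) : ℂ)) := by
      push_cast; ring
    have hD : p + 2 * τ * s ≤ (1 + 2 * τ) * D := by nlinarith
    calc ‖u ^ 2 * p + 2 * τ * u * s‖ ≤ ‖u * p + ((2 * τ * s : ℝ) : ℂ)‖ := by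
          rw [hfac, norm_mul]; exact mul_le_of_le_one_left (norm_nonneg _) hu
      _ ≤ p + 2 * τ * s - δ * p * (2 * τ * s) / (p + 2 * τ * s) :=
          norm_mul_ofReal_add_ofReal_le hu hre hp (by positivity) hpos
      _ ≤ p + 2 * τ * s - 2 * τ * δ / ((1 + 2 * τ) * D) * (p * s) := by
          have : 2 * τ * δ / ((1 + 2 * τ) * D) * (p * s)
              ≤ δ * p * (2 * τ * s) / (p + 2 * τ * s) := by
            rw [div_mul_eq_mul_div, show δ * p * (2 * τ * s) = 2 * τ * δ * (p * s) by ring]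
            exact div_le_div_of_nonneg_left (by positivity) hpos hD
          linarith
  · have hp0 : p = 0 := by nlinarith
    have hs0 : s = 0 := by nlinarith
    simp [hp0, hs0]

lemma smul_smul_add_smul_one_sq {R A : Type*} [CommSemiring R] [Semiring A] [Algebra R A]
    (a u t : R) (X : A) :
    (a • (u • X + t • 1)) ^ 2 = a ^ 2 • (u ^ 2 • X ^ 2 + (2 * u * t) • X + t ^ 2 • 1) := by
  simp only [sq, smul_add, add_mul, mul_add, smul_mul_smul_comm, mul_one, one_mul]
  module

section RowStochastic

variable {ι : Type*} [Fintype ι] [DecidableEq ι] {S : Matrix ι ι ℝ}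

def dampedMatrix (u : ℂ) (τ : ℝ) (S : Matrix ι ι ℝ) : Matrix ι ι ℂ :=
  ((1 : ℂ) + τ)⁻¹ • (u • S.map (↑) + (τ : ℂ) • 1)

lemma mul_self_apply_le_of_mem_rowStochastic (hS : S ∈ rowStochastic ℝ ι) {D : ℝ}
    (hSD : ∀ i j, S i j ≤ D) (i j : ι) : (S * S) i j ≤ D :=
  calc (S * S) i j = ∑ k, S i k * S k j := mul_apply
    _ ≤ ∑ k, S i k * D := by gcongr with k; exacts [nonneg_of_mem_rowStochastic hS, hSD k j]
    _ = D := by rw [← sum_mul, sum_row_of_mem_rowStochastic hS, one_mul]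

lemma dampedMatrix_sq_apply (u : ℂ) (τ : ℝ) (S : Matrix ι ι ℝ) (i j : ι) :
    (dampedMatrix u τ S ^ 2) i j = ((1 : ℂ) + τ)⁻¹ ^ 2 *
      (u ^ 2 * (S * S) i j + 2 * u * τ * S i j + τ ^ 2 * (1 : Matrix ι ι ℝ) i j) := by
  have hmap : (S.map ((↑) : ℝ → ℂ)) ^ 2 = (S * S).map (↑) := by
    rw [sq]; exact (Matrix.map_mul (f := ofRealHom)).symm
  rw [dampedMatrix, smul_smul_add_smul_one_sq, hmap,
    ← Matrix.map_one ((↑) : ℝ → ℂ) ofReal_zero ofReal_one]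
  simp only [Matrix.smul_apply, Matrix.add_apply, map_apply, smul_eq_mul]

lemma norm_dampedMatrix_sq_apply_le (hS : S ∈ rowStochastic ℝ ι) {D : ℝ}
    (hSD : ∀ i j, S i j ≤ D) {u : ℂ} {δ τ : ℝ} (hu : ‖u‖ ≤ 1) (hre : u.re ≤ 1 - δ)
    (hδ : 0 ≤ δ) (hτ : 0 < τ) (i j : ι) :
    ‖(dampedMatrix u τ S ^ 2) i j‖ ≤ ((1 + τ) ^ 2)⁻¹ * ((S * S) i j + 2 * τ * S i j
      - 2 * τ * δ / ((1 + 2 * τ) * D) * ((S * S) i j * S i j)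
      + τ ^ 2 * (1 : Matrix ι ι ℝ) i j) := by
  have hnorm : ‖((1 : ℂ) + τ)⁻¹ ^ 2‖ = ((1 + τ) ^ 2)⁻¹ := by
    rw [norm_pow, norm_inv, ← ofReal_one, ← ofReal_add, norm_real,
      Real.norm_of_nonneg (by positivity), inv_pow]
  have h_one : ‖(1 : Matrix ι ι ℝ) i j‖ = (1 : Matrix ι ι ℝ) i j :=
    Real.norm_of_nonneg (by rw [one_apply]; split_ifs <;> norm_num)
  rw [dampedMatrix_sq_apply, norm_mul, hnorm]
  gcongr
  refine (norm_add_le _ _).trans ?_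
  rw [norm_mul, ← ofReal_pow, norm_real, norm_real, h_one, Real.norm_of_nonneg (by positivity),
    mul_right_comm _ u]
  gcongr
  exact norm_sq_mul_add_mul_le hu hre hδ hτ (nonneg_of_mem_rowStochastic (mul_mem hS hS))
    (nonneg_of_mem_rowStochastic hS) (mul_self_apply_le_of_mem_rowStochastic hS hSD i j)
    (hSD i j)

lemma sum_norm_dampedMatrix_sq_apply_le (hS : S ∈ rowStochastic ℝ ι) {D : ℝ}
    (hSD : ∀ i j, S i j ≤ D) {u : ℂ} {δ τ : ℝ} (hu : ‖u‖ ≤ 1) (hre : u.re ≤ 1 - δ)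
    (hδ : 0 ≤ δ) (hτ : 0 < τ) (i : ι) :
    ∑ j, ‖(dampedMatrix u τ S ^ 2) i j‖
      ≤ 1 - 2 * τ * δ / ((1 + τ) ^ 2 * (1 + 2 * τ) * D) * ∑ j, (S * S) i j * S i j := by
  refine (sum_le_sum fun j _ => norm_dampedMatrix_sq_apply_le hS hSD hu hre hδ hτ i j).trans_eq ?_
  simp only [← mul_sum, sum_add_distrib, sum_sub_distrib, sum_row_of_mem_rowStochastic hS,
    sum_row_of_mem_rowStochastic (mul_mem hS hS), one_apply, sum_ite_eq, mem_univ, if_true]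
  field_simp
  ring

end RowStochastic

section Circulant

variable {G : Type*} [AddCommGroup G] [Fintype G] {f : G → ℝ}

lemma circulant_mem_rowStochastic [DecidableEq G] (hf : ∀ x, 0 ≤ f x) (hsum : ∑ x, f x = 1) :
    circulant f ∈ rowStochastic ℝ G :=
  mem_rowStochastic_iff_sum.2 ⟨fun i j => hf (i - j), fun i => by
    simp only [circulant_apply]
    rw [← hsum]
    exact Fintype.sum_equiv (Equiv.subLeft i) _ _ fun _ => rfl⟩

lemma sum_circulant_mul_self_mul_circulant (f : G → ℝ) (i : G) :
    ∑ j, (circulant f * circulant f) i j * circulant f i j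
      = ∑ x, ∑ y, f y * f (x - y) * f x := by
  refine Fintype.sum_equiv (Equiv.subLeft i) _ _ fun j => ?_
  simp only [mul_apply, circulant_apply, sum_mul, Equiv.subLeft_apply]
  refine Fintype.sum_equiv (Equiv.subLeft i) _ _ fun k => ?_
  simp only [Equiv.subLeft_apply, sub_sub_sub_cancel_left]

lemma card_sq_mul_pow_le_sum (hf : ∀ x, 0 ≤ f x) {T : Finset G} {ε : ℝ} (hε : 0 ≤ ε)
    (hT : ∀ x ∈ T, ε ≤ f x) (hTT : ∀ x ∈ T, ∀ y ∈ T, ε ≤ f (x - y)) :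
    (#T : ℝ) ^ 2 * ε ^ 3 ≤ ∑ x, ∑ y, f y * f (x - y) * f x := by
  have hnonneg : ∀ x y, 0 ≤ f y * f (x - y) * f x := fun x y => by
    have := hf x; have := hf y; have := hf (x - y); positivity
  calc (#T : ℝ) ^ 2 * ε ^ 3 = ∑ x ∈ T, ∑ y ∈ T, ε * ε * ε := by
        simp only [sum_const, nsmul_eq_mul]; ring
    _ ≤ ∑ x ∈ T, ∑ y ∈ T, f y * f (x - y) * f x :=
        sum_le_sum fun x hx => sum_le_sum fun y hy => mul_le_mul
          (mul_le_mul (hT y hy) (hTT x hx y hy) hε (hf y)) (hT x hx) hε (mul_nonneg (hf y) (hf _))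
    _ ≤ ∑ x ∈ T, ∑ y, f y * f (x - y) * f x :=
        sum_le_sum fun x _ =>
          sum_le_sum_of_subset_of_nonneg (subset_univ T) fun y _ _ => hnonneg x y
    _ ≤ ∑ x, ∑ y, f y * f (x - y) * f x :=
        sum_le_sum_of_subset_of_nonneg (subset_univ T) fun x _ _ =>
          sum_nonneg fun y _ => hnonneg x y

end Circulant

lemma abs_rep_sub_le {N : ℕ} (x y : Fin N) : |rep (x - y)| ≤ |rep x| + |rep y| := by
  have hx := x.isLt
  have hy := y.isLt
  have := le_abs_self (rep x); have := neg_abs_le (rep x)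
  have := le_abs_self (rep y); have := neg_abs_le (rep y)
  rw [abs_le]
  unfold rep at *
  rcases le_or_gt y x with h | h
  · have := Fin.coe_sub_iff_le.2 h
    split_ifs at * <;> omega
  · have := Fin.coe_sub_iff_lt.2 h
    split_ifs at * <;> omega

lemma zdist_sub_le {N : ℕ} (x y : Fin N) : zdist (x - y) ≤ zdist x + zdist y := by
  unfold zdist
  exact_mod_cast abs_rep_sub_le x y

lemma zdist_le_val {N : ℕ} (x : Fin N) : zdist x ≤ x.val := by
  have hx := x.isLt
  unfold zdist rep
  split_ifs with h
  · simp
  · have : (N : ℝ) < 2 * (x.val : ℝ) := by exact_mod_cast not_le.1 h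
    rw [abs_le]
    constructor <;> push_cast <;> linarith

lemma min_le_card_two_mul_zdist_le {N : ℕ} (W : ℕ) :
    min N (W / 2 + 1) ≤ #{x : Fin N | 2 * zdist x ≤ W} := by
  rw [← Fin.card_filter_val_lt]
  refine card_le_card fun x hx => ?_
  simp only [mem_filter, mem_univ, true_and] at hx ⊢
  have : (2 * x.val : ℝ) ≤ W := by exact_mod_cast (by omega : 2 * x.val ≤ W)
  linarith [zdist_le_val x]

namespace IsBandProfile

variable {N W : ℕ} {cs Cs : ℝ} {f : Fin N → ℝ}

lemma neZero (hf : IsBandProfile W cs Cs f) : NeZero N :=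
  ⟨by rintro rfl; simpa using hf.sum_one⟩

lemma le_div (hf : IsBandProfile W cs Cs f) (hCs : 0 ≤ Cs) (x : Fin N) : f x ≤ Cs / W :=
  (hf.upper x).trans (by split_ifs; exacts [le_rfl, by positivity])

lemma le_mul_card (hf : IsBandProfile W cs Cs f) (hW : 0 < W) (hCs : 0 ≤ Cs) :
    (W : ℝ) ≤ Cs * N := by
  have h : (1 : ℝ) ≤ N * (Cs / W) := by
    calc (1 : ℝ) = ∑ x, f x := hf.sum_one.symm
      _ ≤ ∑ _x : Fin N, Cs / W := sum_le_sum fun x _ => hf.le_div hCs x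
      _ = N * (Cs / W) := by simp
  rw [mul_div_assoc', le_div_iff₀ (by exact_mod_cast hW)] at h
  linarith

lemma le_sum_circulant_mul_self_mul_circulant (hf : IsBandProfile W cs Cs f) (hW : 0 < W)
    (hcs : 0 ≤ cs) (hCs : 0 < Cs) (i : Fin N) :
    cs ^ 3 / ((2 + Cs) ^ 2 * W) ≤ ∑ j, (circulant f * circulant f) i j * circulant f i j := by
  have := hf.neZero
  have hWR : (0 : ℝ) < W := by exact_mod_cast hW
  set T : Finset (Fin N) := {x | 2 * zdist x ≤ W}
  have hT : ∀ x ∈ T, zdist x ≤ W := fun x hx => by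
    linarith [(mem_filter.1 hx).2, (abs_nonneg _ : 0 ≤ zdist x)]
  have hcard : (W : ℝ) / (2 + Cs) ≤ #T := by
    have hmin : ((min N (W / 2 + 1) : ℕ) : ℝ) ≤ #T := by
      exact_mod_cast min_le_card_two_mul_zdist_le W
    have hhalf : (W : ℝ) ≤ 2 * ((W / 2 + 1 : ℕ) : ℝ) := by
      exact_mod_cast (by omega : W ≤ 2 * (W / 2 + 1))
    have hN := hf.le_mul_card hW hCs.le
    refine le_trans ?_ hmin
    rw [Nat.cast_min, le_min_iff, div_le_iff₀ (by positivity), div_le_iff₀ (by positivity)]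
    constructor <;> nlinarith
  rw [sum_circulant_mul_self_mul_circulant]
  refine le_trans ?_ (card_sq_mul_pow_le_sum hf.nonneg (by positivity : 0 ≤ cs / W)
    (fun x hx => hf.lower x (hT x hx))
    (fun x hx y hy => hf.lower _ ((zdist_sub_le x y).trans ?_)))
  · calc cs ^ 3 / ((2 + Cs) ^ 2 * W) = (W / (2 + Cs)) ^ 2 * (cs / W) ^ 3 := by field_simp
      _ ≤ (#T : ℝ) ^ 2 * (cs / W) ^ 3 := by gcongr
  · linarith [(mem_filter.1 hx).2, (mem_filter.1 hy).2]

end IsBandProfile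

end RBM

open RBM

/-- **Contraction bound for the linearized self-consistent operator** (Lemma 4.2, first part):
with `m = m_sc(z̃ + i0⁺)` and `|Re z̃| ≤ 2 - κ`, for any fixed `τ > 0` one has
`‖((m²S₀ + τ)/(1 + τ))²‖_{ℓ∞→ℓ∞} < 1 - c₁`. -/
theorem contraction_bound
    (cs Cs κ τ : ℝ) (hcs : 0 < cs) (hCs : 0 < Cs) (hκ : 0 < κ) (hτ : 0 < τ) :
    ∃ c₁ > (0:ℝ), ∀ (N W : ℕ), 0 < W →
    ∀ f : Fin N → ℝ, IsBandProfile W cs Cs f →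
    ∀ zt : ℂ, 0 ≤ zt.im → |zt.re| ≤ 2 - κ →
    rowSumNorm
        ((((1 : ℂ) + τ)⁻¹ •
            ((mscB zt) ^ 2 • (Matrix.of fun i j : Fin N => ((f (i - j) : ℝ) : ℂ))
              + (τ : ℂ) • (1 : Matrix (Fin N) (Fin N) ℂ))) ^ 2)
      < 1 - c₁ := by
  set g := τ * κ * cs ^ 3 / ((1 + τ) ^ 2 * (1 + 2 * τ) * Cs * (2 + Cs) ^ 2) with hg_def
  have hg : 0 < g := by positivity
  refine ⟨g / 2, by positivity, ?_⟩
  intro N W hW f hf zt him hre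
  have := hf.neZero
  have hWR : (0 : ℝ) < W := by exact_mod_cast hW
  obtain ⟨hquad, hm⟩ := mscB_spec him (by linarith [abs_nonneg zt.re])
  have hu : ‖mscB zt ^ 2‖ ≤ 1 := by rw [norm_pow]; exact pow_le_one₀ (norm_nonneg _) hm
  -- The matrix of the statement is `dampedMatrix (m²) τ (circulant f)` by definition.
  have hrow : ∀ i, ∑ j, ‖(dampedMatrix (mscB zt ^ 2) τ (circulant f) ^ 2) i j‖ ≤ 1 - g :=
    fun i =>
    calc _ ≤ 1 - 2 * τ * (κ / 2) / ((1 + τ) ^ 2 * (1 + 2 * τ) * (Cs / W))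
          * ∑ j, (circulant f * circulant f) i j * circulant f i j :=
          sum_norm_dampedMatrix_sq_apply_le (circulant_mem_rowStochastic hf.nonneg hf.sum_one)
            (fun i j => hf.le_div hCs.le (i - j)) hu
            (re_sq_le_of_quadratic hquad hm hre) (by positivity) hτ i
      _ ≤ 1 - 2 * τ * (κ / 2) / ((1 + τ) ^ 2 * (1 + 2 * τ) * (Cs / W))
          * (cs ^ 3 / ((2 + Cs) ^ 2 * W)) := by
          gcongr; exact hf.le_sum_circulant_mul_self_mul_circulant hW hcs.le hCs i
      _ = 1 - g := by rw [hg_def]; field_simp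
  exact (ciSup_le hrow).trans_lt (by linarith)
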